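/- Fix t ∈ ℝ and set h s = ⟪γ s, n s⟫ and Δ = det(n t, deriv n t, iteratedDeriv 2 n t). Assume Δ ≠ 0 and let x ∈ E be the unique point satisfying ⟪x, n t⟫ = h t, ⟪x, deriv n t⟫ = deriv h t, ⟪x, iteratedDeriv 2 n t⟫ = iteratedDeriv 2 h t. Then x = γ t if and only if κ2 t = 0. (That is, the point of the singular locus of the boundary-envelope corresponding to t coincides with the boundary point γ t exactly at osculating-tangent points, where the normal curvature κ2 vanishes.) -/

import Mathlib

open scoped RealInnerProductSpace

noncomputable def cross3 (u v : EuclideanSpace ℝ (Fin 3)) : EuclideanSpace ℝ (Fin 3) :=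
  (WithLp.equiv 2 (Fin 3 → ℝ)).symm
    ![u 1 * v 2 - u 2 * v 1, u 2 * v 0 - u 0 * v 2, u 0 * v 1 - u 1 * v 0]

noncomputable def det3 (u v w : EuclideanSpace ℝ (Fin 3)) : ℝ :=
  Matrix.det (Matrix.of (fun i j => ![u, v, w] j i))

/-!
Put `y = x - γ t` and `h = ⟪γ, n⟫`. Since `γ' = e₁ ⊥ n`, we get `h' = ⟪γ, n'⟫` and
`h'' = ⟪γ, n''⟫ + ⟪e₁, n'⟫ = ⟪γ, n''⟫ - κ₂`. Hence `y` is orthogonal to `n` and `n'`, and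
`⟪y, n''⟫ = -κ₂`. So `x = γ t` forces `κ₂ = 0`; conversely, if `κ₂ = 0` then `y` is orthogonal
to `n, n', n''`, which form a basis because `Δ ≠ 0`, so `y = 0`.
-/

theorem EuclideanSpace.eq_zero_of_forall_inner_eq_zero_of_det_ne_zero {n : ℕ}
    {v : Fin n → EuclideanSpace ℝ (Fin n)} (hv : (Matrix.of fun i j => v i j).det ≠ 0)
    {y : EuclideanSpace ℝ (Fin n)} (hy : ∀ i, ⟪y, v i⟫ = 0) : y = 0 := by
  have hmulVec : (Matrix.of fun i j => v i j).mulVec y.ofLp = 0 := by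
    ext i
    simpa [EuclideanSpace.inner_eq_star_dotProduct, Matrix.mulVec] using hy i
  exact WithLp.ofLp_injective 2 (Matrix.eq_zero_of_mulVec_eq_zero hv hmulVec)

theorem eq_zero_of_det3_ne_zero {u v w y : EuclideanSpace ℝ (Fin 3)} (h : det3 u v w ≠ 0)
    (hu : ⟪y, u⟫ = 0) (hv : ⟪y, v⟫ = 0) (hw : ⟪y, w⟫ = 0) : y = 0 := by
  refine EuclideanSpace.eq_zero_of_forall_inner_eq_zero_of_det_ne_zero (v := ![u, v, w]) ?_ ?_
  · rwa [← Matrix.det_transpose]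
  · intro i
    fin_cases i <;> assumption

section RealInnerProductSpace

variable {E : Type*} [NormedAddCommGroup E] [InnerProductSpace ℝ E] {γ n : ℝ → E}

theorem deriv_inner_eq_inner_deriv_of_inner_deriv_eq_zero (hγ : Differentiable ℝ γ)
    (hn : Differentiable ℝ n) (horth : ∀ s, ⟪deriv γ s, n s⟫ = 0) :
    deriv (fun s => ⟪γ s, n s⟫) = fun s => ⟪γ s, deriv n s⟫ := by
  ext s
  rw [((hγ s).hasDerivAt.inner ℝ (hn s).hasDerivAt).deriv, horth, add_zero]

theorem iteratedDeriv_two_inner_of_inner_deriv_eq_zero (hγ : Differentiable ℝ γ)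
    (hn : Differentiable ℝ n) (hn' : Differentiable ℝ (deriv n))
    (horth : ∀ s, ⟪deriv γ s, n s⟫ = 0) (t : ℝ) :
    iteratedDeriv 2 (fun s => ⟪γ s, n s⟫) t =
      ⟪γ t, iteratedDeriv 2 n t⟫ + ⟪deriv γ t, deriv n t⟫ := by
  rw [iteratedDeriv_succ, iteratedDeriv_one,
    deriv_inner_eq_inner_deriv_of_inner_deriv_eq_zero hγ hn horth,
    ((hγ t).hasDerivAt.inner ℝ (hn' t).hasDerivAt).deriv, iteratedDeriv_succ, iteratedDeriv_one]

theorem inner_neg_smul_sub_smul_eq_neg {a b : E} (ha : ‖a‖ = 1) (hab : ⟪a, b⟫ = 0) (k m : ℝ) :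
    ⟪a, (-k) • a - m • b⟫ = -k := by
  rw [inner_sub_right, inner_smul_right, inner_smul_right, real_inner_self_eq_norm_sq, ha, hab]
  ring

end RealInnerProductSpace

theorem stmt11_general
    (γ e1 e2 e3 : ℝ → EuclideanSpace ℝ (Fin 3)) (κ2 κ3 : ℝ → ℝ)
    (hγ : ContDiff ℝ (⊤ : ℕ∞) γ)
    (he3s : ContDiff ℝ (⊤ : ℕ∞) e3)
    (he1 : e1 = deriv γ)
    (hON : ∀ t, Orthonormal ℝ ![e1 t, e2 t, e3 t])
    (hE3 : ∀ t, deriv e3 t = (-(κ2 t)) • e1 t - κ3 t • e2 t)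
    (t : ℝ)
    (hΔ : det3 (e3 t) (deriv e3 t) (iteratedDeriv 2 e3 t) ≠ 0)
    (x : EuclideanSpace ℝ (Fin 3))
    (hx1 : ⟪x, e3 t⟫ = ⟪γ t, e3 t⟫)
    (hx2 : ⟪x, deriv e3 t⟫ = deriv (fun s => ⟪γ s, e3 s⟫) t)
    (hx3 : ⟪x, iteratedDeriv 2 e3 t⟫ = iteratedDeriv 2 (fun s => ⟪γ s, e3 s⟫) t) :
    x = γ t ↔ κ2 t = 0 := by
  have hγd : Differentiable ℝ γ := hγ.differentiable (by simp)
  obtain ⟨he3d, he3'⟩ := contDiff_infty_iff_deriv.mp he3s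
  have he3'd : Differentiable ℝ (deriv e3) := he3'.differentiable (by simp)
  have horth : ∀ s, ⟪deriv γ s, e3 s⟫ = 0 := fun s => by
    simpa [he1] using (hON s).inner_eq_zero (i := 0) (j := 2) (by decide)
  have hnormal : ⟪deriv γ t, deriv e3 t⟫ = -κ2 t := by
    rw [← he1, hE3 t]
    exact inner_neg_smul_sub_smul_eq_neg ((hON t).1 0)
      (by simpa using (hON t).inner_eq_zero (i := 0) (j := 1) (by decide)) _ _
  have hy1 : ⟪x - γ t, e3 t⟫ = 0 := by rw [inner_sub_left, hx1, sub_self]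
  have hy2 : ⟪x - γ t, deriv e3 t⟫ = 0 := by
    rw [inner_sub_left, hx2, deriv_inner_eq_inner_deriv_of_inner_deriv_eq_zero hγd he3d horth,
      sub_self]
  have hy3 : ⟪x - γ t, iteratedDeriv 2 e3 t⟫ = -κ2 t := by
    rw [inner_sub_left, hx3, iteratedDeriv_two_inner_of_inner_deriv_eq_zero hγd he3d he3'd horth,
      hnormal]
    ring
  constructor
  · intro hx
    rw [hx, sub_self, inner_zero_left] at hy3
    linarith
  · intro hκ
    rw [hκ, neg_zero] at hy3
    exact sub_eq_zero.mp (eq_zero_of_det3_ne_zero hΔ hy1 hy2 hy3)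

theorem stmt11
    (γ e1 e2 e3 : ℝ → EuclideanSpace ℝ (Fin 3)) (κ1 κ2 κ3 : ℝ → ℝ)
    (hγ : ContDiff ℝ (⊤ : ℕ∞) γ)
    (he1s : ContDiff ℝ (⊤ : ℕ∞) e1) (he2s : ContDiff ℝ (⊤ : ℕ∞) e2)
    (he3s : ContDiff ℝ (⊤ : ℕ∞) e3)
    (hκ1s : ContDiff ℝ (⊤ : ℕ∞) κ1) (hκ2s : ContDiff ℝ (⊤ : ℕ∞) κ2)
    (hκ3s : ContDiff ℝ (⊤ : ℕ∞) κ3)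
    (he1 : e1 = deriv γ)
    (hON : ∀ t, Orthonormal ℝ ![e1 t, e2 t, e3 t])
    (hor : ∀ t, e3 t = cross3 (e1 t) (e2 t))
    (hE1 : ∀ t, deriv e1 t = κ1 t • e2 t + κ2 t • e3 t)
    (hE2 : ∀ t, deriv e2 t = (-(κ1 t)) • e1 t + κ3 t • e3 t)
    (hE3 : ∀ t, deriv e3 t = (-(κ2 t)) • e1 t - κ3 t • e2 t)
    (t : ℝ)
    (hΔ : det3 (e3 t) (deriv e3 t) (iteratedDeriv 2 e3 t) ≠ 0)
    (x : EuclideanSpace ℝ (Fin 3))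
    (hx1 : ⟪x, e3 t⟫ = ⟪γ t, e3 t⟫)
    (hx2 : ⟪x, deriv e3 t⟫ = deriv (fun s => ⟪γ s, e3 s⟫) t)
    (hx3 : ⟪x, iteratedDeriv 2 e3 t⟫ = iteratedDeriv 2 (fun s => ⟪γ s, e3 s⟫) t) :
    x = γ t ↔ κ2 t = 0 :=
  stmt11_general γ e1 e2 e3 κ2 κ3 hγ he3s he1 hON hE3 t hΔ x hx1 hx2 hx3
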